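/- arXiv:2502.15328 — 5 statements merged into one kernel-verified Lean document; each statement's English description precedes it below -/
import Mathlib

section
/- Let c : ℝ → ℝ³ be smooth with c'(v) = v·a + v³·b(v) for a constant vector a ≠ 0 and a smooth function b, and let ν : ℝ → ℝ³ be a smooth unit vector field with ⟪c'(v), ν(v)⟫ = 0 for all v. Then the limit as v → 0⁺ of det(c'(v), c''(v), ν(v)) / ‖c'(v)‖³ equals (1/3)·det(c''(0), c''''(0), ν(0)) / ‖c''(0)‖³. -/
open scoped RealInnerProductSpace Topology ContDiff
noncomputable section

abbrev E3 := EuclideanSpace ℝ (Fin 3)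

def det3 (x y z : E3) : ℝ :=
  Matrix.det (Matrix.of ![fun i => x i, fun i => y i, fun i => z i])

lemma det3_explicit (x y z : E3) : det3 x y z =
    x 0 * (y 1 * z 2 - y 2 * z 1) - x 1 * (y 0 * z 2 - y 2 * z 0)
      + x 2 * (y 0 * z 1 - y 1 * z 0) := by
  simp [det3, Matrix.det_fin_three]; ring

lemma det3_key (v : ℝ) (a bv bv' n : E3) :
    det3 (v • a + v ^ 3 • bv) (a + (3 * v ^ 2) • bv + v ^ 3 • bv') n
      = v ^ 3 * (2 * det3 a bv n + v * det3 a bv' n + v ^ 3 * det3 bv bv' n) := by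
  simp only [det3_explicit, PiLp.add_apply, PiLp.smul_apply, smul_eq_mul]
  ring

lemma det3_smul2 (x y z : E3) (r : ℝ) : det3 x (r • y) z = r * det3 x y z := by
  simp only [det3_explicit, PiLp.smul_apply, smul_eq_mul]; ring

lemma hasDerivAt_aux1 (b : ℝ → E3) (a : E3) (hb : ContDiff ℝ ∞ b) (v : ℝ) :
    HasDerivAt (fun v : ℝ => v • a + v ^ 3 • b v)
      (a + (3 * v ^ 2) • b v + v ^ 3 • deriv b v) v := by
  have h1 : HasDerivAt (fun v : ℝ => v • a) ((1:ℝ) • a) v :=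
    (hasDerivAt_id v).smul_const a
  have h2 : HasDerivAt (fun v : ℝ => v ^ 3 • b v)
      (v ^ 3 • deriv b v + (↑3 * v ^ 2) • b v) v :=
    (hasDerivAt_pow 3 v).smul (hb.differentiable (by norm_num) v).hasDerivAt
  refine (h1.add h2).congr_deriv ?_
  push_cast
  module

lemma hasDerivAt_aux2 (b : ℝ → E3) (a : E3) (hb : ContDiff ℝ ∞ b) (v : ℝ) :
    HasDerivAt (fun v : ℝ => a + (3 * v ^ 2) • b v + v ^ 3 • deriv b v)
      ((6 * v) • b v + (6 * v ^ 2) • deriv b v + v ^ 3 • deriv (deriv b) v) v := by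
  have hb' : ContDiff ℝ ∞ (deriv b) := (contDiff_infty_iff_deriv.mp hb).2
  have h1 : HasDerivAt (fun v : ℝ => (3 * v ^ 2) • b v)
      ((3 * v ^ 2) • deriv b v + (3 * (↑2 * v ^ 1)) • b v) v :=
    ((hasDerivAt_pow 2 v).const_mul 3).smul (hb.differentiable (by norm_num) v).hasDerivAt
  have h2 : HasDerivAt (fun v : ℝ => v ^ 3 • deriv b v)
      (v ^ 3 • deriv (deriv b) v + (↑3 * v ^ 2) • deriv b v) v :=
    (hasDerivAt_pow 3 v).smul (hb'.differentiable (by norm_num) v).hasDerivAt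
  refine (((hasDerivAt_const v a).add h1).add h2).congr_deriv ?_
  push_cast
  module

lemma hasDerivAt_aux3 (b : ℝ → E3) (hb : ContDiff ℝ ∞ b) :
    HasDerivAt (fun v : ℝ => (6 * v) • b v + (6 * v ^ 2) • deriv b v
        + v ^ 3 • deriv (deriv b) v) ((6:ℝ) • b 0) 0 := by
  have hb' : ContDiff ℝ ∞ (deriv b) := (contDiff_infty_iff_deriv.mp hb).2
  have hb'' : ContDiff ℝ ∞ (deriv (deriv b)) := (contDiff_infty_iff_deriv.mp hb').2
  have h1 : HasDerivAt (fun v : ℝ => (6 * v) • b v)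
      ((6 * (0:ℝ)) • deriv b 0 + ((6:ℝ) * 1) • b 0) 0 :=
    ((hasDerivAt_id 0).const_mul 6).smul (hb.differentiable (by norm_num) 0).hasDerivAt
  have h2 : HasDerivAt (fun v : ℝ => (6 * v ^ 2) • deriv b v)
      ((6 * (0:ℝ) ^ 2) • deriv (deriv b) 0 + (6 * (↑2 * (0:ℝ) ^ 1)) • deriv b 0) 0 :=
    ((hasDerivAt_pow 2 0).const_mul 6).smul (hb'.differentiable (by norm_num) 0).hasDerivAt
  have h3 : HasDerivAt (fun v : ℝ => v ^ 3 • deriv (deriv b) v)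
      ((0:ℝ) ^ 3 • deriv (deriv (deriv b)) 0 + (↑3 * (0:ℝ) ^ 2) • deriv (deriv b) 0) 0 :=
    (hasDerivAt_pow 3 0).smul (hb''.differentiable (by norm_num) 0).hasDerivAt
  refine ((h1.add h2).add h3).congr_deriv ?_
  push_cast
  module

/-- If `c'(v) = v•a + v³•b(v)` with `a ≠ 0`, and `ν` is a smooth unit normal along `c`,
then the geodesic-curvature expression `det(c',c'',ν)/‖c'‖³` tends, as `v → 0⁺`, to
`(1/3)·det(c''(0), c''''(0), ν(0))/‖c''(0)‖³`. -/
theorem stmt1 (c b : ℝ → E3) (a : E3) (ν : ℝ → E3)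
    (hc : ContDiff ℝ (⊤ : ℕ∞) c) (hb : ContDiff ℝ (⊤ : ℕ∞) b) (hν : ContDiff ℝ (⊤ : ℕ∞) ν)
    (ha : a ≠ 0)
    (hder : ∀ v : ℝ, deriv c v = v • a + v ^ 3 • b v)
    (hunit : ∀ v : ℝ, ‖ν v‖ = 1)
    (horth : ∀ v : ℝ, ⟪deriv c v, ν v⟫ = 0) :
    Filter.Tendsto
      (fun v : ℝ => det3 (deriv c v) (iteratedDeriv 2 c v) (ν v) / ‖deriv c v‖ ^ 3)
      (𝓝[>] 0)
      (𝓝 ((1 / 3) * det3 (iteratedDeriv 2 c 0) (iteratedDeriv 4 c 0) (ν 0)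
            / ‖iteratedDeriv 2 c 0‖ ^ 3)) := by
  have hbs : ContDiff ℝ ∞ b := hb.of_le (by simp)
  have hb' : ContDiff ℝ ∞ (deriv b) := (contDiff_infty_iff_deriv.mp hbs).2
  set g : ℝ → E3 := fun v => a + (3 * v ^ 2) • b v + v ^ 3 • deriv b v with hgdef
  set g3 : ℝ → E3 := fun v => (6 * v) • b v + (6 * v ^ 2) • deriv b v
      + v ^ 3 • deriv (deriv b) v with hg3def
  have hd1 : deriv c = fun v => v • a + v ^ 3 • b v := funext hder
  have hd2 : deriv (deriv c) = g := by
    funext v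
    rw [hd1]
    exact (hasDerivAt_aux1 b a hbs v).deriv
  have hit2 : iteratedDeriv 2 c = g := by
    rw [iteratedDeriv_succ, iteratedDeriv_one, hd2]
  have hd3 : deriv g = g3 := funext fun v => (hasDerivAt_aux2 b a hbs v).deriv
  have hit3 : iteratedDeriv 3 c = g3 := by
    have h : iteratedDeriv (2 + 1) c = deriv (iteratedDeriv 2 c) := iteratedDeriv_succ
    rw [hit2, hd3] at h
    exact h
  have hit4 : iteratedDeriv 4 c 0 = (6:ℝ) • b 0 := by
    have h : iteratedDeriv (3 + 1) c = deriv (iteratedDeriv 3 c) := iteratedDeriv_succ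
    rw [hit3] at h
    have : iteratedDeriv 4 c 0 = deriv g3 0 := by rw [h]
    rw [this, (hasDerivAt_aux3 b hbs).deriv]
  have hit20 : iteratedDeriv 2 c 0 = a := by
    rw [hit2]; simp [hgdef]
  -- the limit value
  have hna : ‖a‖ ^ 3 ≠ 0 := pow_ne_zero 3 (norm_ne_zero_iff.mpr ha)
  set K : ℝ → ℝ := fun v => 2 * det3 a (b v) (ν v) + v * det3 a (deriv b v) (ν v)
      + v ^ 3 * det3 (b v) (deriv b v) (ν v) with hKdef
  set D : ℝ → ℝ := fun v => ‖a + v ^ 2 • b v‖ ^ 3 with hDdef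
  have hbc : Continuous b := hb.continuous
  have hb'c : Continuous (deriv b) := hb'.continuous
  have hνc : Continuous ν := hν.continuous
  have hKc : Continuous K := by
    simp only [hKdef, det3_explicit]
    fun_prop
  have hDc : Continuous D := by
    simp only [hDdef]
    fun_prop
  have hD0 : D 0 = ‖a‖ ^ 3 := by simp [hDdef]
  have hH : Filter.Tendsto (fun v => K v / D v) (𝓝[>] (0:ℝ)) (𝓝 (K 0 / D 0)) := by
    refine ((hKc.continuousAt.div hDc.continuousAt ?_).tendsto).mono_left nhdsWithin_le_nhds
    rw [hD0]; exact hna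
  have hval : K 0 / D 0
      = (1 / 3) * det3 (iteratedDeriv 2 c 0) (iteratedDeriv 4 c 0) (ν 0)
          / ‖iteratedDeriv 2 c 0‖ ^ 3 := by
    rw [hit20, hit4, hD0, det3_smul2]
    simp only [hKdef]
    ring_nf
  rw [← hval]
  refine hH.congr' ?_
  filter_upwards [self_mem_nhdsWithin] with v hv
  have hv' : (0:ℝ) < v := hv
  have h1 : deriv c v = v • a + v ^ 3 • b v := hder v
  have h2 : iteratedDeriv 2 c v = g v := by rw [hit2]
  rw [h1, h2]
  have hsplit : v • a + v ^ 3 • b v = v • (a + v ^ 2 • b v) := by module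
  rw [hgdef, det3_key, hsplit, norm_smul, Real.norm_eq_abs, abs_of_pos hv', mul_pow]
  rw [mul_div_mul_left _ _ (ne_of_gt (pow_pos hv' 3))]
end
end

section
/- Define f : ℝ² × ℝ → ℝ³ by f(u,v,s) = (u, u²·f₂₁(u) + v² + u·s·f₂₄(u,s), u²·f₃₁(u) + v²·f₃₂(u,v,s) + v·f₃₃(u,s) + u·s·f₃₄(u,s)), where f₂₁, f₃₁, f₂₄, f₃₂, f₃₃, f₃₄ are smooth functions with f₃₂(0,0,0) = f₃₃(0,0) = 0. If f₃₃ ≡ 0, then for each s the map (u,v) ↦ f(u,v,s) is a frontal, i.e. there exists a smooth unit normal vector field ν(u,v,s) with ⟪f_u, ν⟫ = ⟪f_v, ν⟫ = 0 everywhere near the origin. -/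
open scoped RealInnerProductSpace Topology
noncomputable section

def vec3 (x y z : ℝ) : E3 := WithLp.toLp 2 ![x, y, z]

private def e3aux : E3 ≃L[ℝ] (Fin 3 → ℝ) := EuclideanSpace.equiv (Fin 3) ℝ

private lemma inner_vec3 (a b c x y z : ℝ) :
    ⟪vec3 a b c, vec3 x y z⟫ = a * x + b * y + c * z := by
  simp [vec3, PiLp.inner_apply, Fin.sum_univ_three, RCLike.inner_apply]
  ring

private lemma norm_vec3 (a b c : ℝ) : ‖vec3 a b c‖ = Real.sqrt (a ^ 2 + b ^ 2 + c ^ 2) := by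
  simp [vec3, EuclideanSpace.norm_eq, Fin.sum_univ_three, sq_abs]

private lemma contDiff_vec3 {f g h : ℝ × ℝ → ℝ} (hf : ContDiff ℝ (⊤ : ℕ∞) f) (hg : ContDiff ℝ (⊤ : ℕ∞) g)
    (hh : ContDiff ℝ (⊤ : ℕ∞) h) : ContDiff ℝ (⊤ : ℕ∞) (fun p => vec3 (f p) (g p) (h p)) := by
  have : (fun p => vec3 (f p) (g p) (h p)) = e3aux.symm ∘ (fun p => ![f p, g p, h p]) := rfl
  rw [this]
  exact e3aux.symm.contDiff.comp (contDiff_pi.mpr (by intro i; fin_cases i <;> simpa))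

private lemma hasDerivAt_vec3 {f g h : ℝ → ℝ} {f' g' h' : ℝ} {x : ℝ}
    (hf : HasDerivAt f f' x) (hg : HasDerivAt g g' x) (hh : HasDerivAt h h' x) :
    HasDerivAt (fun t => vec3 (f t) (g t) (h t)) (vec3 f' g' h') x := by
  have hpi : HasDerivAt (fun t => (![f t, g t, h t] : Fin 3 → ℝ)) ![f', g', h'] x := by
    rw [hasDerivAt_pi]
    intro i; fin_cases i
    · simpa using hf
    · simpa using hg
    · simpa using hh
  have := (e3aux.symm.toContinuousLinearMap.hasFDerivAt
    (x := ![f x, g x, h x])).comp_hasDerivAt x hpi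
  exact this

/-- The normal form of a deformation: if the obstruction `f₃₃` vanishes identically, then
for every `s` the map `(u,v) ↦ f(u,v,s)` is a frontal near the origin, i.e. there is a
smooth unit vector field `ν` orthogonal to both partial derivatives `f_u` and `f_v`. -/
theorem stmt4 (f21 f31 : ℝ → ℝ) (f24 f33 f34 : ℝ × ℝ → ℝ) (f32 : ℝ × ℝ × ℝ → ℝ)
    (h21 : ContDiff ℝ (⊤ : ℕ∞) f21) (h31 : ContDiff ℝ (⊤ : ℕ∞) f31)
    (h24 : ContDiff ℝ (⊤ : ℕ∞) f24) (h33 : ContDiff ℝ (⊤ : ℕ∞) f33) (h34 : ContDiff ℝ (⊤ : ℕ∞) f34)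
    (h32 : ContDiff ℝ (⊤ : ℕ∞) f32)
    (h320 : f32 (0, 0, 0) = 0) (h330 : f33 (0, 0) = 0)
    (F : ℝ → ℝ → ℝ → E3)
    (hF : ∀ s u v, F s u v =
      vec3 u
        (u ^ 2 * f21 u + v ^ 2 + u * s * f24 (u, s))
        (u ^ 2 * f31 u + v ^ 2 * f32 (u, v, s) + v * f33 (u, s) + u * s * f34 (u, s)))
    (hvanish : ∀ u s, f33 (u, s) = 0) :
    ∀ s : ℝ, ∃ ν : ℝ → ℝ → E3,
      ContDiff ℝ (⊤ : ℕ∞) (fun p : ℝ × ℝ => ν p.1 p.2) ∧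
      ∃ U ∈ 𝓝 ((0, 0) : ℝ × ℝ), ∀ p ∈ U,
        ‖ν p.1 p.2‖ = 1 ∧
        ⟪deriv (fun u => F s u p.2) p.1, ν p.1 p.2⟫ = 0 ∧
        ⟪deriv (fun v => F s p.1 v) p.2, ν p.1 p.2⟫ = 0 := by
  intro s
  -- simplified formula for F
  have hF' : ∀ u v, F s u v = vec3 u (u ^ 2 * f21 u + v ^ 2 + u * s * f24 (u, s))
      (u ^ 2 * f31 u + v ^ 2 * f32 (u, v, s) + u * s * f34 (u, s)) := by
    intro u v
    rw [hF]
    simp only [hvanish, mul_zero, add_zero]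
  -- partial derivative functions
  set A : ℝ × ℝ → ℝ := fun p =>
    2 * p.1 * f21 p.1 + p.1 ^ 2 * deriv f21 p.1 + s * f24 (p.1, s) +
      p.1 * s * fderiv ℝ f24 (p.1, s) (1, 0) with hAdef
  set B : ℝ × ℝ → ℝ := fun p =>
    2 * p.1 * f31 p.1 + p.1 ^ 2 * deriv f31 p.1 + p.2 ^ 2 * fderiv ℝ f32 (p.1, p.2, s) (1, 0, 0) +
      s * f34 (p.1, s) + p.1 * s * fderiv ℝ f34 (p.1, s) (1, 0) with hBdef
  set G : ℝ × ℝ → ℝ := fun p =>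
    2 * f32 (p.1, p.2, s) + p.2 * fderiv ℝ f32 (p.1, p.2, s) (0, 1, 0) with hGdef
  set q : ℝ × ℝ → ℝ := fun p => (A p * G p - 2 * B p) ^ 2 + G p ^ 2 + 4 with hqdef
  set r : ℝ × ℝ → ℝ := fun p => Real.sqrt (q p) with hrdef
  -- basic smoothness facts
  have hproj1 : ContDiff ℝ (⊤ : ℕ∞) (fun p : ℝ × ℝ => (p.1, s)) := contDiff_fst.prodMk contDiff_const
  have hproj2 : ContDiff ℝ (⊤ : ℕ∞) (fun p : ℝ × ℝ => (p.1, p.2, s)) :=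
    contDiff_fst.prodMk (contDiff_snd.prodMk contDiff_const)
  have hd21 : ContDiff ℝ (⊤ : ℕ∞) (deriv f21) := by
    have h : ContDiff ℝ ((⊤ : ℕ∞) + 1) f21 := by exact h21
    exact (contDiff_succ_iff_deriv.mp h).2.2
  have hd31 : ContDiff ℝ (⊤ : ℕ∞) (deriv f31) := by
    have h : ContDiff ℝ ((⊤ : ℕ∞) + 1) f31 := by exact h31
    exact (contDiff_succ_iff_deriv.mp h).2.2
  have hD24 : ContDiff ℝ (⊤ : ℕ∞) (fun p : ℝ × ℝ => fderiv ℝ f24 p (1, 0)) :=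
    (h24.fderiv_right (by simp)).clm_apply contDiff_const
  have hD34 : ContDiff ℝ (⊤ : ℕ∞) (fun p : ℝ × ℝ => fderiv ℝ f34 p (1, 0)) :=
    (h34.fderiv_right (by simp)).clm_apply contDiff_const
  have hD32u : ContDiff ℝ (⊤ : ℕ∞) (fun p : ℝ × ℝ × ℝ => fderiv ℝ f32 p (1, 0, 0)) :=
    (h32.fderiv_right (by simp)).clm_apply contDiff_const
  have hD32v : ContDiff ℝ (⊤ : ℕ∞) (fun p : ℝ × ℝ × ℝ => fderiv ℝ f32 p (0, 1, 0)) :=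
    (h32.fderiv_right (by simp)).clm_apply contDiff_const
  have hAs : ContDiff ℝ (⊤ : ℕ∞) A := by
    refine (((?_ : ContDiff ℝ (⊤ : ℕ∞) fun p : ℝ × ℝ => 2 * p.1 * f21 p.1).add ?_).add ?_).add ?_
    · exact (contDiff_const.mul contDiff_fst).mul (h21.comp contDiff_fst)
    · exact (contDiff_fst.pow 2).mul (hd21.comp contDiff_fst)
    · exact contDiff_const.mul (h24.comp hproj1)
    · exact (contDiff_fst.mul contDiff_const).mul (hD24.comp hproj1)
  have hBs : ContDiff ℝ (⊤ : ℕ∞) B := by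
    refine ((((?_ : ContDiff ℝ (⊤ : ℕ∞) fun p : ℝ × ℝ => 2 * p.1 * f31 p.1).add ?_).add ?_).add ?_).add ?_
    · exact (contDiff_const.mul contDiff_fst).mul (h31.comp contDiff_fst)
    · exact (contDiff_fst.pow 2).mul (hd31.comp contDiff_fst)
    · exact (contDiff_snd.pow 2).mul (hD32u.comp hproj2)
    · exact contDiff_const.mul (h34.comp hproj1)
    · exact (contDiff_fst.mul contDiff_const).mul (hD34.comp hproj1)
  have hGs : ContDiff ℝ (⊤ : ℕ∞) G :=
    (contDiff_const.mul (h32.comp hproj2)).add (contDiff_snd.mul (hD32v.comp hproj2))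
  have hqs : ContDiff ℝ (⊤ : ℕ∞) q :=
    ((((hAs.mul hGs).sub (contDiff_const.mul hBs)).pow 2).add (hGs.pow 2)).add contDiff_const
  have hqpos : ∀ p, 0 < q p := by
    intro p
    have h1 : (0:ℝ) ≤ (A p * G p - 2 * B p) ^ 2 := sq_nonneg _
    have h2 : (0:ℝ) ≤ G p ^ 2 := sq_nonneg _
    simp only [hqdef]
    nlinarith
  have hrs : ContDiff ℝ (⊤ : ℕ∞) r := by
    rw [contDiff_iff_contDiffAt]
    intro p
    exact (Real.contDiffAt_sqrt (hqpos p).ne').comp p hqs.contDiffAt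
  have hrpos : ∀ p, 0 < r p := fun p => Real.sqrt_pos.mpr (hqpos p)
  have hrne : ∀ p, r p ≠ 0 := fun p => (hrpos p).ne'
  have hrsq : ∀ p, r p ^ 2 = q p := fun p => Real.sq_sqrt (hqpos p).le
  -- the normal vector field
  refine ⟨fun u v => vec3 ((A (u, v) * G (u, v) - 2 * B (u, v)) / r (u, v))
    (-G (u, v) / r (u, v)) (2 / r (u, v)), ?_, Set.univ, Filter.univ_mem, ?_⟩
  · exact contDiff_vec3 (((hAs.mul hGs).sub (contDiff_const.mul hBs)).div hrs (fun p => hrne p))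
      ((hGs.neg).div hrs (fun p => hrne p)) (contDiff_const.div hrs (fun p => hrne p))
  · rintro ⟨u, v⟩ -
    simp only
    -- derivative of u ↦ f24 (u, s) etc.
    have hg24 : HasDerivAt (fun u => f24 (u, s)) (fderiv ℝ f24 (u, s) (1, 0)) u := by
      have := ((h24.differentiable (by simp)) (u, s)).hasFDerivAt.comp_hasDerivAt u
        ((hasDerivAt_id u).prodMk (hasDerivAt_const u s))
      simpa [Function.comp_def] using this
    have hg34 : HasDerivAt (fun u => f34 (u, s)) (fderiv ℝ f34 (u, s) (1, 0)) u := by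
      have := ((h34.differentiable (by simp)) (u, s)).hasFDerivAt.comp_hasDerivAt u
        ((hasDerivAt_id u).prodMk (hasDerivAt_const u s))
      simpa [Function.comp_def] using this
    have hg32u : HasDerivAt (fun u => f32 (u, v, s)) (fderiv ℝ f32 (u, v, s) (1, 0, 0)) u := by
      have := ((h32.differentiable (by simp)) (u, v, s)).hasFDerivAt.comp_hasDerivAt u
        ((hasDerivAt_id u).prodMk ((hasDerivAt_const u v).prodMk (hasDerivAt_const u s)))
      simpa [Function.comp_def] using this
    have hg32v : HasDerivAt (fun v => f32 (u, v, s)) (fderiv ℝ f32 (u, v, s) (0, 1, 0)) v := by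
      have := ((h32.differentiable (by simp)) (u, v, s)).hasFDerivAt.comp_hasDerivAt v
        ((hasDerivAt_const v u).prodMk ((hasDerivAt_id v).prodMk (hasDerivAt_const v s)))
      simpa [Function.comp_def] using this
    -- u-derivative of F
    have hu : HasDerivAt (fun u => F s u v) (vec3 1 (A (u, v)) (B (u, v))) u := by
      have hc2 : HasDerivAt (fun u => u ^ 2 * f21 u + v ^ 2 + u * s * f24 (u, s)) (A (u, v)) u := by
        have := (((hasDerivAt_pow 2 u).mul
            ((h21.differentiable (by simp) u).hasDerivAt)).add (hasDerivAt_const u (v ^ 2))).add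
          (((hasDerivAt_id u).mul_const s).mul hg24)
        refine this.congr_deriv ?_
        simp only [hAdef, id_eq]
        push_cast
        ring
      have hc3 : HasDerivAt (fun u => u ^ 2 * f31 u + v ^ 2 * f32 (u, v, s) + u * s * f34 (u, s))
          (B (u, v)) u := by
        have := (((hasDerivAt_pow 2 u).mul
            ((h31.differentiable (by simp) u).hasDerivAt)).add
            ((hasDerivAt_const u (v ^ 2)).mul hg32u)).add
          (((hasDerivAt_id u).mul_const s).mul hg34)
        refine this.congr_deriv ?_
        simp only [hBdef, id_eq]
        push_cast
        ring
      have := hasDerivAt_vec3 (hasDerivAt_id u) hc2 hc3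
      simp only [id] at this
      exact this.congr_of_eventuallyEq (Filter.Eventually.of_forall fun x => hF' x v)
    -- v-derivative of F
    have hv : HasDerivAt (fun v => F s u v) (vec3 0 (2 * v) (v * G (u, v))) v := by
      have hc2 : HasDerivAt (fun v => u ^ 2 * f21 u + v ^ 2 + u * s * f24 (u, s)) (2 * v) v := by
        have := ((hasDerivAt_const v (u ^ 2 * f21 u)).add (hasDerivAt_pow 2 v)).add
          (hasDerivAt_const v (u * s * f24 (u, s)))
        refine this.congr_deriv ?_
        push_cast
        ring
      have hc3 : HasDerivAt (fun v => u ^ 2 * f31 u + v ^ 2 * f32 (u, v, s) + u * s * f34 (u, s))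
          (v * G (u, v)) v := by
        have := ((hasDerivAt_const v (u ^ 2 * f31 u)).add
            ((hasDerivAt_pow 2 v).mul hg32v)).add (hasDerivAt_const v (u * s * f34 (u, s)))
        refine this.congr_deriv ?_
        simp only [hGdef]
        push_cast
        ring
      have := hasDerivAt_vec3 (hasDerivAt_const v u) hc2 hc3
      exact this.congr_of_eventuallyEq (Filter.Eventually.of_forall fun x => hF' u x)
    refine ⟨?_, ?_, ?_⟩
    · rw [norm_vec3]
      have : ((A (u, v) * G (u, v) - 2 * B (u, v)) / r (u, v)) ^ 2 +
          (-G (u, v) / r (u, v)) ^ 2 + (2 / r (u, v)) ^ 2 = q (u, v) / r (u, v) ^ 2 := by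
        field_simp
        ring
      rw [this, hrsq, div_self (hqpos (u, v)).ne', Real.sqrt_one]
    · rw [hu.deriv, inner_vec3]
      field_simp
      ring
    · rw [hv.deriv, inner_vec3]
      field_simp
      ring
end
end

section
/- In the setting of the previous statement (c₁(u,s) = s + u·s·d₁(s) + u²·d₂(s) + u³·d₃(s) + u⁴·d₄(u,s), d₂(0) = d₂₀² > 0), the implicit solution u(t) of c₁(u(t), -t²) = 0 with u(0)=0, u'(0)>0, has second-order Taylor coefficient u''(0)/2 = (d₁(0)·d₂₀² - d₃(0)) / (2·d₂₀⁴). -/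
open scoped Topology
open Filter
noncomputable section

/-- Second-order Taylor coefficient of the trajectory `u(t)`: with
`c₁(u,s) = s + u s d₁(s) + u² d₂(s) + u³ d₃(s) + u⁴ d₄(u,s)`, `d₂(0) = d₂₀² > 0`, and
`u` the smooth implicit solution of `c₁(u(t), -t²) = 0` with `u(0) = 0`, `u'(0) > 0`,
one has `u''(0)/2 = (d₁(0) d₂₀² - d₃(0))/(2 d₂₀⁴)`. -/
theorem stmt9 (c1 : ℝ × ℝ → ℝ) (d1 d2 d3 : ℝ → ℝ) (d4 : ℝ × ℝ → ℝ) (d20 ε : ℝ)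
    (u : ℝ → ℝ)
    (hc1 : ContDiff ℝ (⊤ : ℕ∞) c1)
    (hd1 : ContDiff ℝ (⊤ : ℕ∞) d1) (hd2 : ContDiff ℝ (⊤ : ℕ∞) d2) (hd3 : ContDiff ℝ (⊤ : ℕ∞) d3)
    (hd4 : ContDiff ℝ (⊤ : ℕ∞) d4)
    (hform : ∀ x s : ℝ, c1 (x, s) =
      s + x * s * d1 s + x ^ 2 * d2 s + x ^ 3 * d3 s + x ^ 4 * d4 (x, s))
    (hd20 : d20 > 0) (hd2v : d2 0 = d20 ^ 2)
    (hε : ε > 0) (hu : ContDiff ℝ (⊤ : ℕ∞) u) (hu0 : u 0 = 0) (hu' : deriv u 0 > 0)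
    (hsol : ∀ t : ℝ, |t| < ε → c1 (u t, -t ^ 2) = 0) :
    iteratedDeriv 2 u 0 / 2 = (d1 0 * d20 ^ 2 - d3 0) / (2 * d20 ^ 4) := by
  set a := deriv u 0 with ha_def
  set B := iteratedDeriv 2 u 0 with hB_def
  set L := 𝓝[≠] (0:ℝ) with hL_def
  -- basic limits
  have hu0' : Tendsto u L (𝓝 0) := by
    have h := hu.continuous.tendsto 0
    rw [hu0] at h
    exact h.mono_left nhdsWithin_le_nhds
  have hs : Tendsto (fun t : ℝ => -t ^ 2) L (𝓝 0) := by
    have h : Tendsto (fun t : ℝ => -t ^ 2) (𝓝 0) (𝓝 (-(0:ℝ) ^ 2)) :=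
      ((continuous_pow 2).neg).tendsto 0
    simpa using h.mono_left nhdsWithin_le_nhds
  have hd1lim : Tendsto (fun t : ℝ => d1 (-t ^ 2)) L (𝓝 (d1 0)) :=
    (hd1.continuous.tendsto 0).comp hs
  have hd2lim : Tendsto (fun t : ℝ => d2 (-t ^ 2)) L (𝓝 (d2 0)) :=
    (hd2.continuous.tendsto 0).comp hs
  have hd3lim : Tendsto (fun t : ℝ => d3 (-t ^ 2)) L (𝓝 (d3 0)) :=
    (hd3.continuous.tendsto 0).comp hs
  have hd4lim : Tendsto (fun t : ℝ => d4 (u t, -t ^ 2)) L (𝓝 (d4 (0, 0))) :=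
    (hd4.continuous.tendsto (0, 0)).comp (hu0'.prodMk_nhds hs)
  have hne : ∀ᶠ t in L, t ≠ 0 := eventually_mem_nhdsWithin
  -- u t / t → a
  have hud : ∀ t, HasDerivAt u (deriv u t) t := fun t => (hu.differentiable (by simp) t).hasDerivAt
  have hA : Tendsto (fun t => u t / t) L (𝓝 a) := by
    have h := hasDerivAt_iff_tendsto_slope.mp (hud 0)
    refine h.congr fun t => ?_
    simp [slope_def_field, hu0]
  -- (u t - a t)/t^2 → B/2 via L'Hopital
  have hderiv2 : HasDerivAt (deriv u) B 0 := by
    have h := ((hu.differentiable_iteratedDeriv 1 (by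
      exact_mod_cast lt_top_iff_ne_top.mpr (by simp))) 0).hasDerivAt
    simp only [iteratedDeriv_one] at h
    simpa [hB_def, iteratedDeriv_succ, iteratedDeriv_one] using h
  have hBslope : Tendsto (fun t => (deriv u t - a) / t) L (𝓝 B) := by
    have h := hasDerivAt_iff_tendsto_slope.mp hderiv2
    refine h.congr fun t => ?_
    simp [slope_def_field, ha_def]
  have hb : Tendsto (fun t => (u t - a * t) / t ^ 2) L (𝓝 (B / 2)) := by
    apply HasDerivAt.lhopital_zero_nhdsNE (f' := fun t => deriv u t - a) (g' := fun t => 2 * t)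
    · filter_upwards with t
      simpa [Pi.sub_def] using (hud t).sub ((hasDerivAt_id t).const_mul a)
    · filter_upwards with t
      simpa using hasDerivAt_pow 2 t
    · filter_upwards [hne] with t ht
      simpa using ht
    · have : Tendsto (fun t : ℝ => a * t) L (𝓝 (a * 0)) :=
        (tendsto_const_nhds.mul tendsto_id).mono_left nhdsWithin_le_nhds
      simpa using hu0'.sub this
    · have h : Tendsto (fun t : ℝ => t ^ 2) (𝓝 0) (𝓝 ((0:ℝ) ^ 2)) := (continuous_pow 2).tendsto 0
      simpa using h.mono_left nhdsWithin_le_nhds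
    · refine (hBslope.div_const 2).congr fun t => ?_
      rw [div_div, mul_comm]
  -- the basic equation
  have heq : ∀ᶠ t in L, -t ^ 2 + u t * (-t ^ 2) * d1 (-t ^ 2) + (u t) ^ 2 * d2 (-t ^ 2)
      + (u t) ^ 3 * d3 (-t ^ 2) + (u t) ^ 4 * d4 (u t, -t ^ 2) = 0 := by
    have hmem : ∀ᶠ t in 𝓝 (0:ℝ), |t| < ε := by
      filter_upwards [Metric.ball_mem_nhds (0:ℝ) hε] with t ht
      simpa [Real.dist_eq] using ht
    filter_upwards [hmem.filter_mono nhdsWithin_le_nhds] with t ht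
    have h := hsol t ht
    rw [hform] at h
    linarith [h]
  -- first equation: a^2 * d2 0 = 1
  have key1 : a ^ 2 * d2 0 = 1 := by
    have hq : Tendsto (fun t => -1 - u t * d1 (-t ^ 2) + (u t / t) ^ 2 * d2 (-t ^ 2)
        + (u t / t) ^ 2 * u t * d3 (-t ^ 2) + (u t / t) ^ 2 * (u t) ^ 2 * d4 (u t, -t ^ 2)) L
        (𝓝 (-1 - 0 * d1 0 + a ^ 2 * d2 0 + a ^ 2 * 0 * d3 0 + a ^ 2 * 0 ^ 2 * d4 (0, 0))) :=
      ((((tendsto_const_nhds.sub (hu0'.mul hd1lim)).add ((hA.pow 2).mul hd2lim)).add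
        (((hA.pow 2).mul hu0').mul hd3lim)).add
        (((hA.pow 2).mul (hu0'.pow 2)).mul hd4lim))
    have hEq : (fun t => -1 - u t * d1 (-t ^ 2) + (u t / t) ^ 2 * d2 (-t ^ 2)
        + (u t / t) ^ 2 * u t * d3 (-t ^ 2) + (u t / t) ^ 2 * (u t) ^ 2 * d4 (u t, -t ^ 2))
        =ᶠ[L] fun _ => (0:ℝ) := by
      filter_upwards [heq, hne] with t h0 ht
      have h2 : (-1 - u t * d1 (-t ^ 2) + (u t / t) ^ 2 * d2 (-t ^ 2)
          + (u t / t) ^ 2 * u t * d3 (-t ^ 2) + (u t / t) ^ 2 * (u t) ^ 2 * d4 (u t, -t ^ 2))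
          = (-t ^ 2 + u t * (-t ^ 2) * d1 (-t ^ 2) + (u t) ^ 2 * d2 (-t ^ 2)
          + (u t) ^ 3 * d3 (-t ^ 2) + (u t) ^ 4 * d4 (u t, -t ^ 2)) / t ^ 2 := by
        field_simp
        ring
      rw [h2, h0, zero_div]
    have h0 := tendsto_nhds_unique (hq.congr' hEq) tendsto_const_nhds
    nlinarith [h0]
  have ha0 : a ≠ 0 := by
    intro h
    rw [h] at key1
    norm_num at key1
  -- second equation
  have hd2slope : Tendsto (fun t => (d2 (-t ^ 2) - d2 0) / (-t ^ 2)) L (𝓝 (deriv d2 0)) := by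
    have h1 := hasDerivAt_iff_tendsto_slope.mp ((hd2.differentiable (by simp) 0).hasDerivAt)
    have hcomp : Tendsto (fun t : ℝ => -t ^ 2) L (𝓝[≠] (0:ℝ)) := by
      rw [tendsto_nhdsWithin_iff]
      refine ⟨hs, ?_⟩
      filter_upwards [hne] with t ht
      simp [ht, pow_eq_zero_iff]
    refine (h1.comp hcomp).congr fun t => ?_
    simp [slope_def_field, Function.comp]
  have hnegt : Tendsto (fun t : ℝ => -t) L (𝓝 0) := by
    have h : Tendsto (fun t : ℝ => -t) (𝓝 0) (𝓝 (-(0:ℝ))) := continuous_neg.tendsto 0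
    simpa using h.mono_left nhdsWithin_le_nhds
  have key2 : d2 0 * (B / 2) * (a + a) + (-a) * d1 0 + a ^ 2 * deriv d2 0 * 0
      + a ^ 3 * d3 0 + a ^ 3 * 0 * d4 (0, 0) = 0 := by
    have hq : Tendsto (fun t => d2 0 * ((u t - a * t) / t ^ 2) * (u t / t + a)
        + (-(u t / t)) * d1 (-t ^ 2) + (u t / t) ^ 2 * ((d2 (-t ^ 2) - d2 0) / (-t ^ 2)) * (-t)
        + (u t / t) ^ 3 * d3 (-t ^ 2) + (u t / t) ^ 3 * u t * d4 (u t, -t ^ 2)) L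
        (𝓝 (d2 0 * (B / 2) * (a + a) + (-a) * d1 0 + a ^ 2 * deriv d2 0 * 0
          + a ^ 3 * d3 0 + a ^ 3 * 0 * d4 (0, 0))) :=
      (((((tendsto_const_nhds.mul hb).mul (hA.add tendsto_const_nhds)).add
        (hA.neg.mul hd1lim)).add (((hA.pow 2).mul hd2slope).mul hnegt)).add
        ((hA.pow 3).mul hd3lim)).add (((hA.pow 3).mul hu0').mul hd4lim)
    have hEq : (fun t => d2 0 * ((u t - a * t) / t ^ 2) * (u t / t + a)
        + (-(u t / t)) * d1 (-t ^ 2) + (u t / t) ^ 2 * ((d2 (-t ^ 2) - d2 0) / (-t ^ 2)) * (-t)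
        + (u t / t) ^ 3 * d3 (-t ^ 2) + (u t / t) ^ 3 * u t * d4 (u t, -t ^ 2))
        =ᶠ[L] fun _ => (0:ℝ) := by
      filter_upwards [heq, hne] with t h0 ht
      have h2 : (d2 0 * ((u t - a * t) / t ^ 2) * (u t / t + a)
          + (-(u t / t)) * d1 (-t ^ 2) + (u t / t) ^ 2 * ((d2 (-t ^ 2) - d2 0) / (-t ^ 2)) * (-t)
          + (u t / t) ^ 3 * d3 (-t ^ 2) + (u t / t) ^ 3 * u t * d4 (u t, -t ^ 2))
          = (-t ^ 2 + u t * (-t ^ 2) * d1 (-t ^ 2) + (u t) ^ 2 * d2 (-t ^ 2)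
          + (u t) ^ 3 * d3 (-t ^ 2) + (u t) ^ 4 * d4 (u t, -t ^ 2)) / t ^ 3 := by
        field_simp
        linear_combination (u t * t ^ 3 + a * t ^ 4) * d2 0 * key1 - t ^ 4 * key1 + (-t ^ 16 - d2 0 * u t * t ^ 3 - d2 0 * a * t ^ 4 + t ^ 4) * key1 + (t ^ 16 - t ^ 2) * key1
      rw [h2, h0, zero_div]
    exact tendsto_nhds_unique (hq.congr' hEq) tendsto_const_nhds
  -- algebra
  have hstep : d2 0 * B - d1 0 + a ^ 2 * d3 0 = 0 := by
    have h : a * (d2 0 * B - d1 0 + a ^ 2 * d3 0) = 0 := by linear_combination key2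
    rcases mul_eq_zero.mp h with h' | h'
    · exact absurd h' ha0
    · exact h'
  have ha2' : a ^ 2 * d20 ^ 2 = 1 := by rw [← hd2v]; exact key1
  have hstep' : d20 ^ 2 * B - d1 0 + a ^ 2 * d3 0 = 0 := by rw [← hd2v]; exact hstep
  have hBd : B * d20 ^ 4 = d1 0 * d20 ^ 2 - d3 0 := by
    linear_combination d20 ^ 2 * hstep' - d3 0 * ha2'
  rw [eq_div_iff (by positivity)]
  linear_combination hBd
end
end

section
/- For the family f_s(u,v) = (u, v², v³(u² + v²) + s·v³), the identifier of singularities λ(u,v) = det(∂_u f_s, ∂_v f_s, ν) (with ν a smooth unit normal) vanishes exactly on {v = 0}, and every point (u₀, 0) is a non-degenerate singular point, i.e. dλ(u₀,0) ≠ 0. -/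
open scoped RealInnerProductSpace Topology
noncomputable section

lemma vec3_decomp (x y z : ℝ) :
    vec3 x y z = x • vec3 1 0 0 + y • vec3 0 1 0 + z • vec3 0 0 1 := by
  ext i; fin_cases i <;> simp [vec3]

lemma hasDerivAt_vec3_s13 {a b c : ℝ → ℝ} {a' b' c' t : ℝ}
    (ha : HasDerivAt a a' t) (hb : HasDerivAt b b' t) (hc : HasDerivAt c c' t) :
    HasDerivAt (fun t => vec3 (a t) (b t) (c t)) (vec3 a' b' c') t := by
  have h1 : (fun t => vec3 (a t) (b t) (c t))
      = fun t => a t • vec3 1 0 0 + b t • vec3 0 1 0 + c t • vec3 0 0 1 :=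
    funext fun t => vec3_decomp _ _ _
  rw [h1, vec3_decomp a' b' c']
  exact ((ha.smul_const _).add (hb.smul_const _)).add (hc.smul_const _)

/-- For the family `f_s(u,v) = (u, v², v³(u²+v²) + s v³)`, the identifier of singularities
`λ = det(f_u, f_v, ν)` (for any smooth unit normal `ν`) vanishes exactly on `{v = 0}`, and
every singular point `(u₀, 0)` is non-degenerate: `dλ(u₀,0) ≠ 0`. -/
theorem stmt13 (s : ℝ) (f : ℝ × ℝ → E3)
    (hf : ∀ p : ℝ × ℝ, f p =
      vec3 p.1 (p.2 ^ 2) (p.2 ^ 3 * (p.1 ^ 2 + p.2 ^ 2) + s * p.2 ^ 3))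
    (ν : ℝ → ℝ → E3)
    (hν : ContDiff ℝ (⊤ : ℕ∞) (fun p : ℝ × ℝ => ν p.1 p.2))
    (hunit : ∀ u v : ℝ, ‖ν u v‖ = 1)
    (horthu : ∀ u v : ℝ, ⟪deriv (fun x => f (x, v)) u, ν u v⟫ = 0)
    (horthv : ∀ u v : ℝ, ⟪deriv (fun y => f (u, y)) v, ν u v⟫ = 0)
    (lam : ℝ × ℝ → ℝ)
    (hlam : ∀ p : ℝ × ℝ, lam p =
      det3 (deriv (fun x => f (x, p.2)) p.1) (deriv (fun y => f (p.1, y)) p.2)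
        (ν p.1 p.2)) :
    (∀ p : ℝ × ℝ, lam p = 0 ↔ p.2 = 0) ∧
    (∀ u₀ : ℝ, fderiv ℝ lam (u₀, 0) ≠ 0) := by
  -- derivatives of f
  have hdu : ∀ u v : ℝ, deriv (fun x => f (x, v)) u = vec3 1 0 (2*u*v^3) := by
    intro u v
    have e : (fun x => f (x, v)) = fun x => vec3 x (v^2) (v^3*x^2 + (v^5 + s*v^3)) := by
      funext x; rw [hf (x, v)]; congr 1 <;> ring
    rw [e]
    have hc : HasDerivAt (fun x : ℝ => v^3*x^2 + (v^5 + s*v^3)) (2*u*v^3) u := by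
      have := ((hasDerivAt_pow 2 u).const_mul (v^3)).add_const (v^5 + s*v^3)
      exact this.congr_deriv (by norm_num <;> ring)
    exact (hasDerivAt_vec3_s13 (hasDerivAt_id u) (hasDerivAt_const u (v^2)) hc).deriv
  have hdv : ∀ u v : ℝ, deriv (fun y => f (u, y)) v
      = vec3 0 (2*v) (3*u^2*v^2 + 5*v^4 + 3*s*v^2) := by
    intro u v
    have e : (fun y => f (u, y)) = fun y => vec3 u (y^2) (u^2*y^3 + y^5 + s*y^3) := by
      funext y; rw [hf (u, y)]; congr 1 <;> ring
    rw [e]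
    have hb : HasDerivAt (fun y : ℝ => y^2) (2*v) v := by simpa using hasDerivAt_pow 2 v
    have hc : HasDerivAt (fun y : ℝ => u^2*y^3 + y^5 + s*y^3)
        (3*u^2*v^2 + 5*v^4 + 3*s*v^2) v := by
      have := (((hasDerivAt_pow 3 v).const_mul (u^2)).add (hasDerivAt_pow 5 v)).add
        ((hasDerivAt_pow 3 v).const_mul s)
      exact this.congr_deriv (by norm_num <;> ring)
    exact (hasDerivAt_vec3_s13 (hasDerivAt_const v u) hb hc).deriv
  -- explicit formula for lam
  have hlam' : ∀ u v : ℝ, lam (u, v) = 2*v*(ν u v 2)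
      - (3*u^2*v^2 + 5*v^4 + 3*s*v^2)*(ν u v 1) - (2*u*v^3)*(2*v)*(ν u v 0) := by
    intro u v
    rw [hlam (u, v)]
    simp only [hdu u v, hdv u v]
    simp [det3, Matrix.det_fin_three, vec3]
  -- orthogonality equations
  have ho1 : ∀ u v : ℝ, ν u v 0 + (2*u*v^3) * ν u v 2 = 0 := by
    intro u v
    have := horthu u v
    rw [hdu u v] at this
    simp [PiLp.inner_apply, Fin.sum_univ_three, vec3] at this
    linear_combination this
  have ho2 : ∀ u v : ℝ, (2*v) * ν u v 1 + (3*u^2*v^2 + 5*v^4 + 3*s*v^2) * ν u v 2 = 0 := by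
    intro u v
    have := horthv u v
    rw [hdv u v] at this
    simp [PiLp.inner_apply, Fin.sum_univ_three, vec3] at this
    linear_combination this
  -- unit normal
  have hn : ∀ u v : ℝ, (ν u v 0)^2 + (ν u v 1)^2 + (ν u v 2)^2 = 1 := by
    intro u v
    have h2 : ⟪ν u v, ν u v⟫ = 1 := by rw [real_inner_self_eq_norm_sq, hunit u v]; norm_num
    rw [PiLp.inner_apply, Fin.sum_univ_three] at h2
    simp only [RCLike.inner_apply, conj_trivial] at h2
    nlinarith [h2]
  -- key algebraic identity (valid for all u v)
  have hsq : ∀ u v : ℝ, (ν u v 2)^2 * (4*v^2 + 4*(2*u*v^3)^2*v^2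
      + (3*u^2*v^2 + 5*v^4 + 3*s*v^2)^2) = 4*v^2 := by
    intro u v
    linear_combination (4*v^2)*(hn u v)
      + (4*v^2*((2*u*v^3)*(ν u v 2) - ν u v 0))*(ho1 u v)
      + ((3*u^2*v^2 + 5*v^4 + 3*s*v^2)*(ν u v 2) - 2*v*(ν u v 1))*(ho2 u v)
  -- smoothness of the components of ν
  have hνi : ∀ i : Fin 3, ContDiff ℝ (⊤ : ℕ∞) (fun p : ℝ × ℝ => ν p.1 p.2 i) := by
    intro i
    exact (EuclideanSpace.proj i : E3 →L[ℝ] ℝ).contDiff.comp hν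
  constructor
  · -- part 1
    rintro ⟨u, v⟩
    constructor
    · intro h0
      by_contra hv
      have he1 : ν u v 0 + 2*u*v^3 * ν u v 2 = 0 := ho1 u v
      have he2 : (2*v) * ν u v 1 + (3*u^2*v^2 + 5*v^4 + 3*s*v^2) * ν u v 2 = 0 := ho2 u v
      have hl0 : 2*v*(ν u v 2) - (3*u^2*v^2 + 5*v^4 + 3*s*v^2)*(ν u v 1)
          - (2*u*v^3)*(2*v)*(ν u v 0) = 0 := by rw [← hlam' u v]; exact h0
      have hK : (ν u v 2) * (4*v^2 + 4*(2*u*v^3)^2*v^2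
          + (3*u^2*v^2 + 5*v^4 + 3*s*v^2)^2) = 0 := by
        linear_combination (2*v)*hl0 + ((3*u^2*v^2 + 5*v^4 + 3*s*v^2))*he2
          + (4*(2*u*v^3)*v^2)*he1
      have hsq' := hsq u v
      rcases mul_eq_zero.mp hK with h | h
      · rw [h] at hsq'; simp at hsq'; exact hv hsq'
      · rw [h] at hsq'; simp at hsq'; exact hv hsq'
    · intro h0
      have hv0 : v = 0 := h0
      rw [hlam' u v, hv0]; ring
  · -- part 2
    intro u₀ hfd
    -- Step A : (ν u₀ 0 2)^2 = 1 by continuity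
    have hcont2 : Continuous fun v : ℝ => ν u₀ v 2 := by
      have h1 : Continuous fun v : ℝ => ((u₀, v) : ℝ × ℝ) :=
        continuous_const.prodMk continuous_id
      exact ((hνi 2).continuous).comp h1
    set g : ℝ → ℝ := fun v => (ν u₀ v 2)^2
      * (4 + 4*(2*u₀*v^3)^2 + v^2*(3*u₀^2 + 5*v^2 + 3*s)^2) - 4 with hg
    have hgv : ∀ v : ℝ, v ≠ 0 → g v = 0 := by
      intro v hv
      have h1 := hsq u₀ v
      have h2 : g v * v^2 = 0 * v^2 := by
        rw [hg]; simp only []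
        linear_combination h1
      have := mul_right_cancel₀ (pow_ne_zero 2 hv) h2
      simpa using this
    have hgc : Continuous g := by
      rw [hg]; fun_prop
    have hg0 : g 0 = 0 := by
      have ht1 : Filter.Tendsto g (𝓝[≠] (0:ℝ)) (𝓝 (g 0)) :=
        (hgc.continuousAt).continuousWithinAt.tendsto
      have hEv : g =ᶠ[𝓝[≠] (0:ℝ)] fun _ => 0 := by
        filter_upwards [self_mem_nhdsWithin] with v hv
        exact hgv v hv
      have ht2 : Filter.Tendsto g (𝓝[≠] (0:ℝ)) (𝓝 0) := by
        rw [Filter.tendsto_congr' hEv]; exact tendsto_const_nhds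
      exact tendsto_nhds_unique ht1 ht2
    have hA : (ν u₀ 0 2)^2 = 1 := by
      rw [hg] at hg0; simp only [] at hg0
      nlinarith [hg0]
    -- Step B : the v-derivative of lam at (u₀,0) equals 2 * ν u₀ 0 2 ≠ 0
    have hlamEq : lam = fun p : ℝ × ℝ => 2*p.2*(ν p.1 p.2 2)
        - (3*p.1^2*p.2^2 + 5*p.2^4 + 3*s*p.2^2)*(ν p.1 p.2 1)
        - (2*p.1*p.2^3)*(2*p.2)*(ν p.1 p.2 0) := by
      funext p
      have := hlam' p.1 p.2
      simpa using this
    have hlamCD : ContDiff ℝ (⊤ : ℕ∞) lam := by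
      rw [hlamEq]
      have h0 := hνi 0; have h1 := hνi 1; have h2 := hνi 2
      fun_prop
    have hdiff : DifferentiableAt ℝ lam (u₀, 0) :=
      (hlamCD.differentiable (by simp)).differentiableAt
    -- derivative of v ↦ ν u₀ v i at 0
    have hνd : ∀ i : Fin 3, DifferentiableAt ℝ (fun v : ℝ => ν u₀ v i) 0 := by
      intro i
      have hline : Differentiable ℝ fun v : ℝ => ((u₀, v) : ℝ × ℝ) :=
        (differentiable_const _).prodMk differentiable_id
      exact (((hνi i).differentiable (by simp)).comp hline).differentiableAt
    -- direct computation of the derivative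
    have hdirect : HasDerivAt (fun v => lam (u₀, v)) (2 * ν u₀ 0 2) 0 := by
      have e : (fun v => lam (u₀, v)) = fun v => (2*v)*(ν u₀ v 2)
          - v^2*((3*u₀^2 + 5*v^2 + 3*s)*(ν u₀ v 1))
          - v^4*((4*u₀)*(ν u₀ v 0)) := by
        funext v; rw [hlam' u₀ v]; ring
      rw [e]
      have hd2 := (hνd 2).hasDerivAt
      have hmul1 : HasDerivAt (fun v : ℝ => (2*v)*(ν u₀ v 2))
          (2 * ν u₀ 0 2 + (2*0) * deriv (fun v : ℝ => ν u₀ v 2) 0) 0 := by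
        have hlin : HasDerivAt (fun v : ℝ => 2*v) 2 0 := by
          simpa using (hasDerivAt_id (0:ℝ)).const_mul 2
        exact hlin.mul hd2
      have hq1 : DifferentiableAt ℝ (fun v : ℝ => (3*u₀^2 + 5*v^2 + 3*s)*(ν u₀ v 1)) 0 := by
        apply DifferentiableAt.mul _ (hνd 1)
        fun_prop
      have hq0 : DifferentiableAt ℝ (fun v : ℝ => (4*u₀)*(ν u₀ v 0)) 0 :=
        (hνd 0).const_mul _
      have hmul2 := (hasDerivAt_pow 2 (0:ℝ)).mul hq1.hasDerivAt
      have hmul3 := (hasDerivAt_pow 4 (0:ℝ)).mul hq0.hasDerivAt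
      have := (hmul1.sub hmul2).sub hmul3
      exact this.congr_deriv (by norm_num)
    -- composite derivative is 0 if fderiv is 0
    have hline : HasDerivAt (fun v : ℝ => ((u₀, v) : ℝ × ℝ)) ((0:ℝ), (1:ℝ)) 0 :=
      (hasDerivAt_const 0 u₀).prodMk (hasDerivAt_id 0)
    have hcomp : HasDerivAt (fun v => lam (u₀, v)) 0 0 := by
      have h1 := hdiff.hasFDerivAt.comp_hasDerivAt 0 hline
      rw [hfd] at h1
      simp at h1; exact h1
    have := hcomp.unique hdirect
    nlinarith [hA, this]
end
end

section
/- In the same setting (s = 0 normal form of a cuspidal S₁⁻ singularity with branch v(u) of the self-intersection curve), the geodesic curvature of the curve u ↦ f(u, v(u)) at u = 0 equals (2·f₂₁(0)·c₃(0,0) - c₁''(0)) / c₃(0,0), where geodesic curvature is κ_g = det(c', c'', ν)/‖c'‖³ at u = 0. -/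
open scoped RealInnerProductSpace Topology
noncomputable section

lemma hasDerivAt_vec3_s16 {g1 g2 g3 : ℝ → ℝ} {a b d u : ℝ}
    (h1 : HasDerivAt g1 a u) (h2 : HasDerivAt g2 b u) (h3 : HasDerivAt g3 d u) :
    HasDerivAt (fun t => vec3 (g1 t) (g2 t) (g3 t)) (vec3 a b d) u := by
  have hpi : HasDerivAt (fun t => (![g1 t, g2 t, g3 t] : Fin 3 → ℝ)) ![a, b, d] u := by
    rw [hasDerivAt_pi]
    intro i
    fin_cases i <;> simpa
  exact ((PiLp.continuousLinearEquiv 2 ℝ (fun _ : Fin 3 => ℝ)).symm.hasFDerivAt).comp_hasDerivAt u hpi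

/-- Geodesic curvature of the self-intersection curve of a cuspidal `S₁⁻` singularity in
normal form: along a branch `v(u)`, the geodesic curvature `det(c', c'', ν)/‖c'‖³` of
`c(u) = f(u, v(u))` at `u = 0` equals `(2 f₂₁(0) c₃(0,0) - c₁''(0)) / c₃(0,0)`. -/
theorem stmt16 (f21 f31 : ℝ → ℝ) (f32 : ℝ × ℝ → ℝ)
    (c0 c1 : ℝ → ℝ) (c2 c3 : ℝ × ℝ → ℝ)
    (h21 : ContDiff ℝ (⊤ : ℕ∞) f21) (h31 : ContDiff ℝ (⊤ : ℕ∞) f31) (h32 : ContDiff ℝ (⊤ : ℕ∞) f32)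
    (hc0 : ContDiff ℝ (⊤ : ℕ∞) c0) (hc1 : ContDiff ℝ (⊤ : ℕ∞) c1)
    (hc2 : ContDiff ℝ (⊤ : ℕ∞) c2) (hc3 : ContDiff ℝ (⊤ : ℕ∞) c3)
    (hdecomp : ∀ u w : ℝ, f32 (u, w) =
      c0 u + w * c1 u + w ^ 2 * c2 (u, w ^ 2) + w ^ 3 * c3 (u, w ^ 2))
    (hc00 : c0 0 = 0) (hc10 : c1 0 = 0) (hc1' : deriv c1 0 = 0)
    (hc3ne : c3 (0, 0) ≠ 0)
    (hsign : iteratedDeriv 2 c1 0 * c3 (0, 0) < 0)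
    (F : ℝ × ℝ → E3)
    (hF : ∀ p : ℝ × ℝ, F p =
      vec3 p.1 (p.1 ^ 2 * f21 p.1 + p.2 ^ 2)
        (p.1 ^ 2 * f31 p.1 + p.2 ^ 2 * f32 (p.1, p.2)))
    (v : ℝ → ℝ) (hv : ContDiff ℝ (⊤ : ℕ∞) v) (hv0 : v 0 = 0)
    (hv' : (deriv v 0) ^ 2 = -(iteratedDeriv 2 c1 0) / (2 * c3 (0, 0)))
    (hbranch : ∀ᶠ u in 𝓝 (0 : ℝ), c1 u + (v u) ^ 2 * c3 (u, (v u) ^ 2) = 0)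
    (ν : ℝ → ℝ → E3)
    (hν : ContDiff ℝ (⊤ : ℕ∞) (fun p : ℝ × ℝ => ν p.1 p.2))
    (hunit : ∀ u w : ℝ, ‖ν u w‖ = 1)
    (horthu : ∀ u w : ℝ, ⟪deriv (fun x => F (x, w)) u, ν u w⟫ = 0)
    (horthv : ∀ u w : ℝ, ⟪deriv (fun y => F (u, y)) w, ν u w⟫ = 0)
    (hν0 : ν 0 0 = vec3 0 0 1)
    (c : ℝ → E3) (hc : ∀ u : ℝ, c u = F (u, v u)) :
    det3 (deriv c 0) (iteratedDeriv 2 c 0) (ν 0 0) / ‖deriv c 0‖ ^ 3 =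
      (2 * f21 0 * c3 (0, 0) - iteratedDeriv 2 c1 0) / c3 (0, 0) := by
  -- auxiliary smooth function h(u) = f32 (u, v u)
  set h : ℝ → ℝ := fun u => f32 (u, v u) with hhdef
  have hh : ContDiff ℝ (⊤ : ℕ∞) h := h32.comp (contDiff_id.prodMk hv)
  have h0 : h 0 = 0 := by
    simp only [hhdef]; rw [hv0, hdecomp 0 0, hc00, hc10]; ring
  -- differentiability facts
  have d21 : Differentiable ℝ f21 := h21.differentiable (by simp)
  have d21' : Differentiable ℝ (deriv f21) := ((contDiff_infty_iff_deriv.mp (h21.of_le (by simp))).2).differentiable (by simp)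
  have d31 : Differentiable ℝ f31 := h31.differentiable (by simp)
  have d31' : Differentiable ℝ (deriv f31) := ((contDiff_infty_iff_deriv.mp (h31.of_le (by simp))).2).differentiable (by simp)
  have dv : Differentiable ℝ v := hv.differentiable (by simp)
  have dv' : Differentiable ℝ (deriv v) := ((contDiff_infty_iff_deriv.mp (hv.of_le (by simp))).2).differentiable (by simp)
  have dh : Differentiable ℝ h := hh.differentiable (by simp)
  have dh' : Differentiable ℝ (deriv h) := ((contDiff_infty_iff_deriv.mp (hh.of_le (by simp))).2).differentiable (by simp)
  -- component derivative functions
  set φ2 : ℝ → ℝ := fun u => (2*u*f21 u + u^2*deriv f21 u) + 2*v u*deriv v u with hφ2def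
  set φ3 : ℝ → ℝ := fun u =>
    (2*u*f31 u + u^2*deriv f31 u) + (2*v u*deriv v u*h u + (v u)^2*deriv h u) with hφ3def
  have key2 : ∀ u, HasDerivAt (fun t => t^2*f21 t + (v t)^2) (φ2 u) u := by
    intro u
    have A := (hasDerivAt_pow 2 u).mul ((d21 u).hasDerivAt)
    have B := ((dv u).hasDerivAt).pow 2
    refine (A.add B).congr_deriv ?_
    simp only [hφ2def]
    ring
  have key3 : ∀ u, HasDerivAt (fun t => t^2*f31 t + (v t)^2 * h t) (φ3 u) u := by
    intro u
    have A := (hasDerivAt_pow 2 u).mul ((d31 u).hasDerivAt)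
    have B := (((dv u).hasDerivAt).pow 2).mul ((dh u).hasDerivAt)
    refine (A.add B).congr_deriv ?_
    simp only [hφ3def, Pi.pow_apply]
    ring
  -- c as a vec3 of components
  have hceq : c = fun u => vec3 u (u^2*f21 u + (v u)^2) (u^2*f31 u + (v u)^2 * h u) := by
    funext u
    rw [hc u, hF (u, v u)]
  have hcder : ∀ u, HasDerivAt c (vec3 1 (φ2 u) (φ3 u)) u := by
    intro u
    rw [hceq]
    exact hasDerivAt_vec3_s16 (hasDerivAt_id u) (key2 u) (key3 u)
  have hderiv_c : deriv c = fun u => vec3 1 (φ2 u) (φ3 u) := funext fun u => (hcder u).deriv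
  -- first derivative at 0
  have hφ20 : φ2 0 = 0 := by simp [hφ2def, hv0]
  have hφ30 : φ3 0 = 0 := by simp [hφ3def, hv0]
  have hc'0 : deriv c 0 = vec3 1 0 0 := by rw [hderiv_c]; simp [hφ20, hφ30]
  -- second derivative components at 0
  have hφ2' : HasDerivAt φ2 (2*f21 0 + 2*(deriv v 0)^2) 0 := by
    have A : HasDerivAt (fun u : ℝ => 2*u*f21 u) (2*f21 0) 0 := by
      have := (((hasDerivAt_id (0:ℝ)).const_mul 2)).mul ((d21 0).hasDerivAt)
      refine this.congr_deriv ?_; simp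
    have B : HasDerivAt (fun u : ℝ => u^2*deriv f21 u) 0 0 := by
      have := (hasDerivAt_pow 2 (0:ℝ)).mul ((d21' 0).hasDerivAt)
      refine this.congr_deriv ?_; ring
    have C : HasDerivAt (fun u : ℝ => 2*v u*deriv v u) (2*(deriv v 0)^2) 0 := by
      have := (((dv 0).hasDerivAt).const_mul 2).mul ((dv' 0).hasDerivAt)
      refine this.congr_deriv ?_; rw [hv0]; ring
    have := (A.add B).add C
    refine this.congr_deriv ?_; ring
  have hφ3' : HasDerivAt φ3 (2*f31 0) 0 := by
    have A : HasDerivAt (fun u : ℝ => 2*u*f31 u) (2*f31 0) 0 := by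
      have := (((hasDerivAt_id (0:ℝ)).const_mul 2)).mul ((d31 0).hasDerivAt)
      refine this.congr_deriv ?_; simp
    have B : HasDerivAt (fun u : ℝ => u^2*deriv f31 u) 0 0 := by
      have := (hasDerivAt_pow 2 (0:ℝ)).mul ((d31' 0).hasDerivAt)
      refine this.congr_deriv ?_; ring
    have C : HasDerivAt (fun u : ℝ => 2*v u*deriv v u*h u) 0 0 := by
      have := ((((dv 0).hasDerivAt).const_mul 2).mul ((dv' 0).hasDerivAt)).mul ((dh 0).hasDerivAt)
      refine this.congr_deriv ?_; simp only [Pi.mul_apply]; rw [hv0, h0]; ring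
    have D : HasDerivAt (fun u : ℝ => (v u)^2*deriv h u) 0 0 := by
      have := (((dv 0).hasDerivAt).pow 2).mul ((dh' 0).hasDerivAt)
      refine this.congr_deriv ?_; simp only [Pi.pow_apply]; rw [hv0]; ring
    have := (A.add B).add (C.add D)
    refine this.congr_deriv ?_; ring
  have hc''0 : iteratedDeriv 2 c 0 = vec3 0 (2*f21 0 + 2*(deriv v 0)^2) (2*f31 0) := by
    rw [show (2:ℕ) = 1 + 1 from rfl, iteratedDeriv_succ, iteratedDeriv_one]
    rw [hderiv_c]
    exact (hasDerivAt_vec3_s16 (hasDerivAt_const 0 1) hφ2' hφ3').deriv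
  -- norm of c'(0)
  have hnorm : ‖(vec3 1 0 0 : E3)‖ = 1 := by
    rw [EuclideanSpace.norm_eq]
    simp [vec3, Fin.sum_univ_three]
  -- determinant
  have hdet : det3 (vec3 1 0 0) (vec3 0 (2*f21 0 + 2*(deriv v 0)^2) (2*f31 0)) (vec3 0 0 1)
      = 2*f21 0 + 2*(deriv v 0)^2 := by
    simp [det3, vec3, Matrix.det_fin_three]
  rw [hc''0, hc'0, hν0, hnorm, hdet, hv']
  have hc3ne' : c3 (0 : ℝ × ℝ) ≠ 0 := hc3ne
  field_simp [hc3ne, hc3ne']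
  ring
end
end
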